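/- Let C be a convex market model. Then A(C) is closed in probability (in the product topology of convergence in probability on adapted processes) if and only if A_T(C) is closed in probability in L^0. -/

import Mathlib

/-!
The transfer lemma reduces everything to terminal sums: an adapted claim process `c` lies in
`A(C)` iff `∑ₜ cₜ ∈ A_T(C)`, the hedge being the running sum of `wₜ - cₜ` for a decomposition
`∑ₜ cₜ = ∑ₜ wₜ` with `wₜ ∈ L⁰(Cₜ, ℱₜ)`. Since summation is continuous in probability, closedness
of `A_T(C)` passes to `A(C)`. Conversely, a terminal claim `g` is identified with the process
that pays `g` at time `T` and nothing before; this requires `g` to be `ℱ_T`-measurable, which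
can be arranged up to a null set because the approximating sums are `ℱ_T`-measurable and a
subsequence converges almost surely.
-/

open MeasureTheory Finset Filter Topology

section Telescoping

variable {α : Type*} [AddCommGroup α]

theorem sum_range_succ_sub_prev (x : ℕ → α) (N : ℕ) :
    ∑ t ∈ range (N + 1), (x t - if t = 0 then 0 else x (t - 1)) = x N := by
  induction N with
  | zero => simp
  | succ N ih => rw [sum_range_succ, ih]; simp

theorem sum_range_succ_sub_ite_sum (D : ℕ → α) (t : ℕ) :
    (∑ s ∈ range (t + 1), D s) - (if t = 0 then 0 else ∑ s ∈ range (t - 1 + 1), D s) = D t := by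
  cases t <;> simp [sum_range_succ]

end Telescoping

section ConvergenceInMeasure

variable {Ω E ι : Type*} [MeasurableSpace Ω] {μ : Measure Ω} {l : Filter ι}

theorem tendstoInMeasure_const [PseudoEMetricSpace E] (g : Ω → E) :
    TendstoInMeasure μ (fun _ : ι => g) l g := by
  intro ε hε
  simpa [hε.not_ge] using tendsto_const_nhds

theorem TendstoInMeasure.add [SeminormedAddCommGroup E] {f f' : ι → Ω → E} {g g' : Ω → E}
    (hf : TendstoInMeasure μ f l g) (hf' : TendstoInMeasure μ f' l g') :
    TendstoInMeasure μ (fun n => f n + f' n) l (g + g') := by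
  intro ε hε
  have hsub : ∀ n, {ω | ε ≤ edist ((f n + f' n) ω) ((g + g') ω)} ⊆
      {ω | ε / 2 ≤ edist (f n ω) (g ω)} ∪ {ω | ε / 2 ≤ edist (f' n ω) (g' ω)} := by
    intro n ω hω
    by_contra! hlt
    simp only [Set.mem_union, Set.mem_ofPred_eq, not_or, not_le] at hlt
    refine (hω.trans (edist_add_add_le _ _ _ _)).not_gt ?_
    simpa [ENNReal.add_halves] using ENNReal.add_lt_add hlt.1 hlt.2
  have hsum := (hf _ (ENNReal.half_pos hε.ne')).add (hf' _ (ENNReal.half_pos hε.ne'))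
  rw [add_zero] at hsum
  exact tendsto_of_tendsto_of_tendsto_of_le_of_le tendsto_const_nhds hsum (fun _ => zero_le)
    fun n => (measure_mono (hsub n)).trans (measure_union_le _ _)

theorem tendstoInMeasure_finset_sum [SeminormedAddCommGroup E] {κ : Type*} {s : Finset κ}
    {f : ι → κ → Ω → E} {g : κ → Ω → E}
    (hf : ∀ i ∈ s, TendstoInMeasure μ (fun n => f n i) l (g i)) :
    TendstoInMeasure μ (fun n ω => ∑ i ∈ s, f n i ω) l (fun ω => ∑ i ∈ s, g i ω) := by
  classical
  induction s using Finset.induction with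
  | empty =>
    simp only [sum_empty]
    exact tendstoInMeasure_const _
  | insert a s has ih =>
    simp only [sum_insert has]
    exact TendstoInMeasure.add (hf a (mem_insert_self a s))
      (ih fun i hi => hf i (mem_insert_of_mem hi))

theorem aestronglyMeasurable_of_tendstoInMeasure [EMetricSpace E]
    [CompleteSpace E] [Nonempty E] (m : MeasurableSpace Ω) {f : ℕ → Ω → E} {g : Ω → E}
    (hf : ∀ n, StronglyMeasurable[m] (f n)) (h : TendstoInMeasure μ f atTop g) :
    AEStronglyMeasurable[m] g μ := by
  obtain ⟨ns, -, hns⟩ := h.exists_seq_tendsto_ae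
  refine ⟨fun ω => limUnder atTop fun k => f (ns k) ω,
    StronglyMeasurable.limUnder fun k => hf (ns k), ?_⟩
  filter_upwards [hns] with ω hω
  exact hω.limUnder_eq.symm

end ConvergenceInMeasure

theorem measurable_sum_range_of_adapted {Ω E : Type*} [MeasurableSpace E] [AddCommMonoid E]
    [MeasurableAdd₂ E] {F : ℕ → MeasurableSpace Ω} (hF : Monotone F) {f : ℕ → Ω → E}
    (hf : ∀ s, Measurable[F s] (f s)) (t : ℕ) :
    Measurable[F t] fun ω => ∑ s ∈ range (t + 1), f s ω :=
  Finset.measurable_sum _ fun s hs =>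
    (hf s).mono (hF (Nat.lt_succ_iff.1 (mem_range.1 hs))) le_rfl

theorem measurable_pi_single_apply {Ω E : Type*} [MeasurableSpace E] [Zero E]
    {F : ℕ → MeasurableSpace Ω} {T : ℕ} {g : Ω → E} (hg : Measurable[F T] g) (t : ℕ) :
    Measurable[F t] ((Pi.single T g : ℕ → Ω → E) t) := by
  obtain rfl | ht := eq_or_ne t T
  · simpa using hg
  · rw [Pi.single_eq_of_ne ht]
    exact measurable_const

section MarketModel

variable {Ω E : Type*} [MeasurableSpace Ω] [MeasurableSpace E] [AddCommGroup E]

/-- The set `A(C)`; the position before time `0` is `0`. -/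
def hedgeableClaims (F : ℕ → MeasurableSpace Ω) (P : Measure Ω) (C : ℕ → Ω → Set E) (T : ℕ) :
    Set (ℕ → Ω → E) :=
  {c | ∃ x : ℕ → Ω → E, (∀ t, Measurable[F t] (x t)) ∧ (∀ᵐ ω ∂P, x T ω = 0) ∧
    ∀ t ≤ T, ∀ᵐ ω ∂P, x t ω - (if t = 0 then 0 else x (t - 1) ω) + c t ω ∈ C t ω}

/-- The set `A_T(C) = L⁰(C₀, ℱ₀) + ⋯ + L⁰(C_T, ℱ_T)`. -/
def sumsOfSelections (F : ℕ → MeasurableSpace Ω) (P : Measure Ω) (C : ℕ → Ω → Set E) (T : ℕ) :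
    Set (Ω → E) :=
  {g | ∃ w : ℕ → Ω → E, (∀ t, Measurable[F t] (w t)) ∧ (∀ t ≤ T, ∀ᵐ ω ∂P, w t ω ∈ C t ω) ∧
    ∀ᵐ ω ∂P, g ω = ∑ t ∈ range (T + 1), w t ω}

variable {F : ℕ → MeasurableSpace Ω} {P : Measure Ω} {C : ℕ → Ω → Set E} {T : ℕ}

theorem mem_sumsOfSelections_congr_ae {g g' : Ω → E} (h : g =ᵐ[P] g') :
    g ∈ sumsOfSelections F P C T ↔ g' ∈ sumsOfSelections F P C T := by
  refine exists_congr fun w => and_congr_right fun _ => and_congr_right fun _ => ?_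
  exact ⟨fun hw => h.symm.trans hw, fun hw => h.trans hw⟩

variable [MeasurableAdd₂ E]

theorem exists_measurable_ae_eq_of_mem_sumsOfSelections (hF : Monotone F) {g : Ω → E}
    (hg : g ∈ sumsOfSelections F P C T) :
    ∃ g', Measurable[F T] g' ∧ g' ∈ sumsOfSelections F P C T ∧ g =ᵐ[P] g' := by
  obtain ⟨w, hw, hwC, hgw⟩ := hg
  exact ⟨_, measurable_sum_range_of_adapted hF hw T, ⟨w, hw, hwC, ae_of_all _ fun _ => rfl⟩, hgw⟩

variable [MeasurableSub₂ E]

/-- The transfer lemma. -/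
theorem mem_hedgeableClaims_iff (hF : Monotone F) {c : ℕ → Ω → E}
    (hc : ∀ t, Measurable[F t] (c t)) :
    c ∈ hedgeableClaims F P C T ↔
      (fun ω => ∑ t ∈ range (T + 1), c t ω) ∈ sumsOfSelections F P C T := by
  constructor
  · rintro ⟨x, hx, hxT, hxC⟩
    refine ⟨fun t ω => x t ω - (if t = 0 then 0 else x (t - 1) ω) + c t ω, fun t => ?_, hxC, ?_⟩
    · have hprev : Measurable[F t] fun ω => if t = 0 then 0 else x (t - 1) ω := by
        obtain rfl | ht := eq_or_ne t 0
        · exact measurable_const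
        · simpa [ht] using (hx (t - 1)).mono (hF (Nat.sub_le t 1)) le_rfl
      exact ((hx t).sub hprev).add (hc t)
    · filter_upwards [hxT] with ω hω
      rw [sum_add_distrib, sum_range_succ_sub_prev (x · ω), hω, zero_add]
  · rintro ⟨w, hw, hwC, hcw⟩
    refine ⟨fun t ω => ∑ s ∈ range (t + 1), (w s ω - c s ω),
      measurable_sum_range_of_adapted hF (fun s => (hw s).sub (hc s)), ?_, fun t ht => ?_⟩
    · filter_upwards [hcw] with ω hω
      rw [sum_sub_distrib, ← hω, sub_self]
    · filter_upwards [hwC t ht] with ω hω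
      rwa [sum_range_succ_sub_ite_sum (fun s => w s ω - c s ω), sub_add_cancel]

theorem pi_single_mem_hedgeableClaims_iff (hF : Monotone F) {g : Ω → E} (hg : Measurable[F T] g) :
    Pi.single T g ∈ hedgeableClaims F P C T ↔ g ∈ sumsOfSelections F P C T := by
  have hsum : (fun ω => ∑ t ∈ range (T + 1), (Pi.single T g : ℕ → Ω → E) t ω) = g := by
    ext ω
    simp [← Finset.sum_apply, sum_pi_single']
  rw [mem_hedgeableClaims_iff hF (measurable_pi_single_apply hg), hsum]

end MarketModel

section Closedness

variable {Ω E : Type*} [m0 : MeasurableSpace Ω] [NormedAddCommGroup E] [MeasurableSpace E]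
  [BorelSpace E] [SecondCountableTopology E]
  {F : ℕ → MeasurableSpace Ω} {P : Measure Ω} {C : ℕ → Ω → Set E} {T : ℕ}

theorem hedgeableClaims_limit_mem_of_sumsOfSelections_closed (hFm : ∀ t, F t ≤ m0)
    (hF : Monotone F)
    (hAT : ∀ (gseq : ℕ → Ω → E) (g : Ω → E), (∀ n, Measurable (gseq n)) → Measurable g →
      (∀ n, gseq n ∈ sumsOfSelections F P C T) → TendstoInMeasure P gseq atTop g →
      g ∈ sumsOfSelections F P C T)
    {cseq : ℕ → ℕ → Ω → E} {c : ℕ → Ω → E} (hcseq : ∀ n t, Measurable[F t] (cseq n t))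
    (hc : ∀ t, Measurable[F t] (c t)) (hmem : ∀ n, cseq n ∈ hedgeableClaims F P C T)
    (hconv : ∀ t ≤ T, TendstoInMeasure P (fun n => cseq n t) atTop (c t)) :
    c ∈ hedgeableClaims F P C T := by
  have hmeas {x : ℕ → Ω → E} (hx : ∀ t, Measurable[F t] (x t)) :
      Measurable fun ω => ∑ t ∈ range (T + 1), x t ω :=
    Finset.measurable_sum _ fun t _ => (hx t).mono (hFm t) le_rfl
  rw [mem_hedgeableClaims_iff hF hc]
  exact hAT _ _ (fun n => hmeas (hcseq n)) (hmeas hc)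
    (fun n => (mem_hedgeableClaims_iff hF (hcseq n)).1 (hmem n))
    (tendstoInMeasure_finset_sum fun t ht => hconv t (Nat.lt_succ_iff.1 (mem_range.1 ht)))

theorem sumsOfSelections_limit_mem_of_hedgeableClaims_closed [CompleteSpace E] (hF : Monotone F)
    (hA : ∀ (cseq : ℕ → ℕ → Ω → E) (c : ℕ → Ω → E), (∀ n t, Measurable[F t] (cseq n t)) →
      (∀ t, Measurable[F t] (c t)) → (∀ n, cseq n ∈ hedgeableClaims F P C T) →
      (∀ t ≤ T, TendstoInMeasure P (fun n => cseq n t) atTop (c t)) →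
      c ∈ hedgeableClaims F P C T)
    {gseq : ℕ → Ω → E} {g : Ω → E} (hgseq : ∀ n, gseq n ∈ sumsOfSelections F P C T)
    (hconv : TendstoInMeasure P gseq atTop g) :
    g ∈ sumsOfSelections F P C T := by
  choose S hSm hSmem hS using
    fun n => exists_measurable_ae_eq_of_mem_sumsOfSelections hF (hgseq n)
  have hSconv : TendstoInMeasure P S atTop g := hconv.congr_left hS
  obtain ⟨g', hg'm, hgg'⟩ := aestronglyMeasurable_of_tendstoInMeasure (F T)
    (fun n => (hSm n).stronglyMeasurable) hSconv
  rw [mem_sumsOfSelections_congr_ae hgg', ← pi_single_mem_hedgeableClaims_iff hF hg'm.measurable]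
  refine hA (fun n => Pi.single T (S n)) (Pi.single T g')
    (fun n => measurable_pi_single_apply (hSm n)) (measurable_pi_single_apply hg'm.measurable)
    (fun n => (pi_single_mem_hedgeableClaims_iff hF (hSm n)).2 (hSmem n)) fun t _ => ?_
  obtain rfl | ht := eq_or_ne t T
  · simpa using TendstoInMeasure.congr_right hgg' hSconv
  · simpa [Pi.single_eq_of_ne ht] using tendstoInMeasure_const (0 : Ω → E)

end Closedness

theorem A_closed_iff_AT_closed_general {Ω : Type*} [m0 : MeasurableSpace Ω]
    (P : Measure Ω) (d T : ℕ)
    (F : ℕ → MeasurableSpace Ω) (hF : ∀ t, F t ≤ m0) (hmono : ∀ s t, s ≤ t → F s ≤ F t)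
    (C : ℕ → Ω → Set (Fin d → ℝ)) :
    -- A(C) sequentially closed in probability (componentwise), on adapted processes
    ((∀ (cseq : ℕ → ℕ → Ω → Fin d → ℝ) (c : ℕ → Ω → Fin d → ℝ),
        (∀ n t, Measurable[F t] (cseq n t)) → (∀ t, Measurable[F t] (c t)) →
        (∀ n, ∃ x : ℕ → Ω → Fin d → ℝ, (∀ t, Measurable[F t] (x t)) ∧
          (∀ᵐ ω ∂P, x T ω = 0) ∧
          (∀ t ≤ T, ∀ᵐ ω ∂P,
            x t ω - (if t = 0 then 0 else x (t - 1) ω) + cseq n t ω ∈ C t ω)) →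
        (∀ t ≤ T, TendstoInMeasure P (fun n => cseq n t) atTop (c t)) →
        (∃ x : ℕ → Ω → Fin d → ℝ, (∀ t, Measurable[F t] (x t)) ∧
          (∀ᵐ ω ∂P, x T ω = 0) ∧
          (∀ t ≤ T, ∀ᵐ ω ∂P,
            x t ω - (if t = 0 then 0 else x (t - 1) ω) + c t ω ∈ C t ω))) ↔
    -- A_T(C) sequentially closed in probability in L⁰
      (∀ (gseq : ℕ → Ω → Fin d → ℝ) (g : Ω → Fin d → ℝ),
        (∀ n, Measurable (gseq n)) → Measurable g →
        (∀ n, ∃ w : ℕ → Ω → Fin d → ℝ, (∀ t, Measurable[F t] (w t)) ∧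
          (∀ t ≤ T, ∀ᵐ ω ∂P, w t ω ∈ C t ω) ∧
          (∀ᵐ ω ∂P, gseq n ω = ∑ t ∈ range (T + 1), w t ω)) →
        TendstoInMeasure P gseq atTop g →
        (∃ w : ℕ → Ω → Fin d → ℝ, (∀ t, Measurable[F t] (w t)) ∧
          (∀ t ≤ T, ∀ᵐ ω ∂P, w t ω ∈ C t ω) ∧
          (∀ᵐ ω ∂P, g ω = ∑ t ∈ range (T + 1), w t ω)))) :=
  ⟨fun hA _ _ _ _ => sumsOfSelections_limit_mem_of_hedgeableClaims_closed hmono hA,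
    fun hAT _ _ => hedgeableClaims_limit_mem_of_sumsOfSelections_closed hF hmono hAT⟩

/-- `A(C)` is (sequentially) closed in the product topology of convergence in probability
on adapted processes iff `A_T(C)` is (sequentially) closed in probability in `L⁰`. -/
theorem A_closed_iff_AT_closed {Ω : Type*} [m0 : MeasurableSpace Ω]
    (P : Measure Ω) [IsProbabilityMeasure P] (d T : ℕ)
    (F : ℕ → MeasurableSpace Ω) (hF : ∀ t, F t ≤ m0) (hmono : ∀ s t, s ≤ t → F s ≤ F t)
    (C : ℕ → Ω → Set (Fin d → ℝ))
    (hCneg : ∀ t, ∀ ω, {v : Fin d → ℝ | ∀ i, v i ≤ 0} ⊆ C t ω)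
    (hCclosed : ∀ t ω, IsClosed (C t ω)) (hCconv : ∀ t ω, Convex ℝ (C t ω)) :
    -- A(C) sequentially closed in probability (componentwise), on adapted processes
    ((∀ (cseq : ℕ → ℕ → Ω → Fin d → ℝ) (c : ℕ → Ω → Fin d → ℝ),
        (∀ n t, Measurable[F t] (cseq n t)) → (∀ t, Measurable[F t] (c t)) →
        (∀ n, ∃ x : ℕ → Ω → Fin d → ℝ, (∀ t, Measurable[F t] (x t)) ∧
          (∀ᵐ ω ∂P, x T ω = 0) ∧
          (∀ t ≤ T, ∀ᵐ ω ∂P,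
            x t ω - (if t = 0 then 0 else x (t - 1) ω) + cseq n t ω ∈ C t ω)) →
        (∀ t ≤ T, TendstoInMeasure P (fun n => cseq n t) atTop (c t)) →
        (∃ x : ℕ → Ω → Fin d → ℝ, (∀ t, Measurable[F t] (x t)) ∧
          (∀ᵐ ω ∂P, x T ω = 0) ∧
          (∀ t ≤ T, ∀ᵐ ω ∂P,
            x t ω - (if t = 0 then 0 else x (t - 1) ω) + c t ω ∈ C t ω))) ↔
    -- A_T(C) sequentially closed in probability in L⁰
      (∀ (gseq : ℕ → Ω → Fin d → ℝ) (g : Ω → Fin d → ℝ),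
        (∀ n, Measurable (gseq n)) → Measurable g →
        (∀ n, ∃ w : ℕ → Ω → Fin d → ℝ, (∀ t, Measurable[F t] (w t)) ∧
          (∀ t ≤ T, ∀ᵐ ω ∂P, w t ω ∈ C t ω) ∧
          (∀ᵐ ω ∂P, gseq n ω = ∑ t ∈ range (T + 1), w t ω)) →
        TendstoInMeasure P gseq atTop g →
        (∃ w : ℕ → Ω → Fin d → ℝ, (∀ t, Measurable[F t] (w t)) ∧
          (∀ t ≤ T, ∀ᵐ ω ∂P, w t ω ∈ C t ω) ∧
          (∀ᵐ ω ∂P, g ω = ∑ t ∈ range (T + 1), w t ω)))) :=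
  A_closed_iff_AT_closed_general (m0 := m0) P d T F hF hmono C
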